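/- Rooted trees of height at most h, with nodes labelled from a finite set, are well-quasi-ordered under the root-preserving, label-preserving subtree containment relation. Equivalently, there is no infinite antichain and no infinite strictly descending sequence. -/

import Mathlib

/-- A rooted unordered `t`-labelled tree: each node carries a set of labels
from a fixed set of `t` labels, and a list of children (limbs). -/
inductive LTree (t : ℕ) : Type
  | node (label : Finset (Fin t)) (children : List (LTree t)) : LTree t

namespace LTree

mutual
  /-- Height of a rooted tree (a single node has height 0). -/
  def height {t : ℕ} : LTree t → ℕ
    | .node _ cs => heightList cs
  /-- Auxiliary: `heightList cs` = max over `c ∈ cs` of `height c + 1`. -/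
  def heightList {t : ℕ} : List (LTree t) → ℕ
    | [] => 0
    | c :: cs => max (height c + 1) (heightList cs)
end

mutual
  /-- Number of nodes of a rooted tree. -/
  def size {t : ℕ} : LTree t → ℕ
    | .node _ cs => 1 + sizeList cs
  def sizeList {t : ℕ} : List (LTree t) → ℕ
    | [] => 0
    | c :: cs => size c + sizeList cs
end

/-- l-isomorphism of rooted labelled trees: a root- and label-preserving
isomorphism (children are unordered). -/
inductive LIso {t : ℕ} : LTree t → LTree t → Prop
  | node (a : Finset (Fin t)) (cs ds ds' : List (LTree t)) :
      List.Forall₂ LIso cs ds' → List.Perm ds' ds →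
      LIso (.node a cs) (.node a ds)

open scoped Classical in
/-- The number of members of `cs` l-isomorphic to `c`. -/
noncomputable def limbCount {t : ℕ} (c : LTree t) (cs : List (LTree t)) : ℕ :=
  cs.countP fun d => decide (LIso c d)

/-- `ReducedB f i T`: the tree `T`, regarded as a tree of height ≤ i, is
f-reduced: at every node at level j+1 each l-isomorphism class of its limbs
occurs at most f(j) times. -/
def ReducedB {t : ℕ} (f : ℕ → ℕ) : ℕ → LTree t → Prop
  | 0, _ => True
  | i + 1, .node _ cs =>
      (∀ c ∈ cs, ReducedB f i c) ∧ ∀ c ∈ cs, limbCount c cs ≤ f i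

end LTree

open LTree in
/-- Rooted, label-preserving embedding of labelled rooted trees: an injective
map preserving root, labels and the parent-child relation (children mapped to
children in the multiset sense). -/
inductive Emb {t : ℕ} : LTree t → LTree t → Prop
  | node (a : Finset (Fin t)) (cs ds es : List (LTree t)) :
      List.Forall₂ Emb cs es → es.Subperm ds →
      Emb (.node a cs) (.node a ds)

namespace EmbAux

open LTree

variable {t : ℕ}

/-- The root label. -/
def lab : LTree t → Finset (Fin t)
  | .node a _ => a

/-- The children. -/
def chn : LTree t → List (LTree t)
  | .node _ cs => cs

theorem eq_node (x : LTree t) : x = .node (lab x) (chn x) := by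
  cases x <;> rfl

theorem heightList_eq_zero {cs : List (LTree t)} (h : heightList cs = 0) : cs = [] := by
  cases cs with
  | nil => rfl
  | cons c cs => simp [heightList] at h

theorem height_mem {c : LTree t} {cs : List (LTree t)} (hc : c ∈ cs) :
    c.height + 1 ≤ heightList cs := by
  induction cs with
  | nil => cases hc
  | cons d ds ih =>
    rcases List.mem_cons.1 hc with rfl | h
    · exact le_max_left _ _
    · exact le_trans (ih h) (le_max_right _ _)

theorem size_mem {c : LTree t} {cs : List (LTree t)} (hc : c ∈ cs) :
    c.size ≤ sizeList cs := by
  induction cs with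
  | nil => cases hc
  | cons d ds ih =>
    rcases List.mem_cons.1 hc with rfl | h
    · simp [sizeList]
    · calc c.size ≤ sizeList ds := ih h
        _ ≤ _ := by simp [sizeList]

theorem forall₂_refl_aux (n : ℕ) : ∀ x : LTree t, x.size ≤ n → Emb x x := by
  induction n with
  | zero =>
    intro x hx
    cases x with
    | node a cs => simp [size] at hx
  | succ n ih =>
    intro x hx
    cases x with
    | node a cs =>
      refine Emb.node a cs cs cs ?_ (List.Subperm.refl cs)
      refine List.forall₂_same.2 fun c hc => ih c ?_
      have h1 := size_mem hc
      have : (LTree.node a cs).size = 1 + sizeList cs := rfl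
      omega

theorem emb_refl (x : LTree t) : Emb x x := forall₂_refl_aux x.size x le_rfl

instance : IsRefl (LTree t) Emb := ⟨emb_refl⟩

/-- Forall₂ along a sublist. -/
theorem sublist_forall₂ {α : Type*} {r : α → α → Prop} :
    ∀ {u l₂ l₃ : List α}, List.Sublist u l₂ → List.Forall₂ r l₂ l₃ →
      ∃ v, List.Forall₂ r u v ∧ List.Sublist v l₃ := by
  intro u l₂ l₃ hsub hf
  induction hsub generalizing l₃ with
  | slnil => exact ⟨[], List.Forall₂.nil, List.nil_sublist _⟩
  | cons a h ih =>
    rcases hf with _ | ⟨hab, hf'⟩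
    obtain ⟨v, hv1, hv2⟩ := ih hf'
    exact ⟨v, hv1, hv2.trans (List.sublist_cons_self _ _)⟩
  | cons_cons a h ih =>
    rcases hf with _ | ⟨hab, hf'⟩
    obtain ⟨v, hv1, hv2⟩ := ih hf'
    exact ⟨_ :: v, List.Forall₂.cons hab hv1, hv2.cons₂ _⟩

/-- Composing a subperm with a Forall₂. -/
theorem subperm_forall₂ {α : Type*} {r : α → α → Prop} {es ds gs : List α}
    (h1 : es.Subperm ds) (h2 : List.Forall₂ r ds gs) :
    ∃ v, List.Forall₂ r es v ∧ v.Subperm gs := by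
  obtain ⟨u, hu1, hu2⟩ := h1
  obtain ⟨w, hw1, hw2⟩ := sublist_forall₂ hu2 h2
  obtain ⟨w', hw'1, hw'2⟩ := List.perm_comp_forall₂ hu1.symm hw1
  exact ⟨w', hw'1, ⟨w, hw'2.symm, hw2⟩⟩

theorem forall₂_trans_aux {cs es v : List (LTree t)}
    (ih : ∀ c ∈ cs, ∀ y z, Emb c y → Emb y z → Emb c z)
    (h1 : List.Forall₂ Emb cs es) (h2 : List.Forall₂ Emb es v) :
    List.Forall₂ Emb cs v := by
  induction h1 generalizing v with
  | nil => cases h2; exact List.Forall₂.nil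
  | @cons a b l1 l2 hab h ih2 =>
    rcases h2 with _ | ⟨hbc, h2'⟩
    exact List.Forall₂.cons
      (ih a List.mem_cons_self _ _ hab hbc)
      (ih2 (fun c hc => ih c (List.mem_cons_of_mem _ hc)) h2')

theorem emb_trans_aux (n : ℕ) :
    ∀ x y z : LTree t, x.size ≤ n → Emb x y → Emb y z → Emb x z := by
  induction n with
  | zero =>
    intro x y z hx
    cases x with
    | node a cs => simp [size] at hx
  | succ n ih =>
    intro x y z hx hxy hyz
    cases hxy with
    | node a cs ds es hf1 hs1 =>
    cases hyz with
    | node _ _ fs gs hf2 hs2 =>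
    obtain ⟨v, hv1, hv2⟩ := subperm_forall₂ hs1 hf2
    refine Emb.node a cs fs v ?_ (hv2.trans hs2)
    refine forall₂_trans_aux (fun c hc y' z' h1 h2 => ih c y' z' ?_ h1 h2) hf1 hv1
    have h1 := size_mem hc
    have h2 : (LTree.node a cs).size = 1 + sizeList cs := rfl
    rw [h2] at hx
    omega

theorem emb_trans {x y z : LTree t} (h1 : Emb x y) (h2 : Emb y z) : Emb x z :=
  emb_trans_aux x.size x y z le_rfl h1 h2

instance : IsTrans (LTree t) Emb := ⟨fun _ _ _ => emb_trans⟩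

instance : IsPreorder (LTree t) Emb := { refl := emb_refl, trans := fun _ _ _ => emb_trans }

/-- The main induction: trees of height at most `h` are pwo under `Emb`. -/
theorem pwo_height (t h : ℕ) :
    {T : LTree t | T.height ≤ h}.PartiallyWellOrderedOn Emb := by
  induction h with
  | zero =>
    have hfin : {T : LTree t | T.height ≤ 0}.Finite := by
      have hsub : {T : LTree t | T.height ≤ 0} ⊆
          (fun a : Finset (Fin t) => LTree.node a []) '' Set.univ := by
        intro T hT
        cases T with
        | node a cs =>
          have hcs : cs = [] := heightList_eq_zero (Nat.le_zero.1 hT)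
          exact ⟨a, Set.mem_univ a, by rw [hcs]⟩
      exact Set.Finite.subset ((Set.finite_univ).image _) hsub
    exact hfin.partiallyWellOrderedOn
  | succ h ihh =>
    rw [Set.partiallyWellOrderedOn_iff_exists_lt]
    intro f hf
    -- pigeonhole on labels
    obtain ⟨a, ha⟩ := Finite.exists_infinite_fiber (fun n => lab (f n))
    have hS : {n | lab (f n) = a}.Infinite := by
      rw [← Set.infinite_coe_iff]
      convert ha using 2
      rfl
    set φ : ℕ → ℕ := fun n => Nat.nth (fun n => lab (f n) = a) n with hφ
    have hmem : ∀ n, lab (f (φ n)) = a := fun n =>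
      Nat.nth_mem_of_infinite hS n
    -- Higman's lemma on children
    have hH := ihh.partiallyWellOrderedOn_sublistForall₂ (r := Emb)
    obtain ⟨m, n, hmn, hrel⟩ := hH.exists_lt (f := fun n => chn (f (φ n))) (by
      intro k x hx
      have h1 : (f (φ k)).height ≤ h + 1 := hf (φ k)
      have h2 : x.height + 1 ≤ heightList (chn (f (φ k))) := height_mem hx
      have h3 : (f (φ k)).height = heightList (chn (f (φ k))) := by
        conv_lhs => rw [eq_node (f (φ k))]
        rfl
      simp only [Set.mem_setOf_eq]
      omega)
    refine ⟨φ m, φ n, (Nat.nth_lt_nth hS).2 hmn, ?_⟩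
    obtain ⟨l, hl1, hl2⟩ := List.sublistForall₂_iff.1 hrel
    have e1 : f (φ m) = .node a (chn (f (φ m))) := by
      conv_lhs => rw [eq_node (f (φ m))]; rw [hmem m]
    have e2 : f (φ n) = .node a (chn (f (φ n))) := by
      conv_lhs => rw [eq_node (f (φ n))]; rw [hmem n]
    rw [e1, e2]
    exact Emb.node a _ _ l hl1 hl2.subperm

end EmbAux

open LTree in
/-- Rooted t-labelled trees of height at most h are well-quasi-ordered under
label-preserving rooted embedding: every infinite sequence contains i < j with
the i-th tree embedding into the j-th. -/
theorem stmt10 (t h : ℕ) (g : ℕ → LTree t) (hg : ∀ n, (g n).height ≤ h) :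
    ∃ i j : ℕ, i < j ∧ Emb (g i) (g j) := by
  obtain ⟨i, j, hij, h⟩ := (EmbAux.pwo_height t h).exists_lt (f := g) hg
  exact ⟨i, j, hij, h⟩
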